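/- arXiv:1703.02368 — 2 statements merged into one kernel-verified Lean document; each statement's English description precedes it below -/
import Mathlib

section
/- Let U ⊆ ℝ² ≅ ℂ be open, let ℋ: ℝ³ → ℝ be continuous, and let ψ: U → ℝ³ be a C² map satisfying ψ_uu + ψ_vv = 2 ℋ(ψ) ψ_u ×_L ψ_v on U. Then the complex-valued function Q(u + iv) := (⟨ψ_u,ψ_u⟩_L − ⟨ψ_v,ψ_v⟩_L) − 2i ⟨ψ_u,ψ_v⟩_L is holomorphic on U (as a function of w = u + iv). -/
noncomputable section

open Real Set Metric Filter MeasureTheory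

set_option synthInstance.maxHeartbeats 1000000
set_option maxHeartbeats 1000000

/-- Points of Minkowski 3-space, as nested pairs. -/
abbrev R3 : Type := ℝ × ℝ × ℝ

/-- The Lorentzian inner product `⟨a,b⟩_L = a₁b₁ + a₂b₂ − a₃b₃` of Minkowski 3-space. -/
def lor (a b : R3) : ℝ := a.1 * b.1 + a.2.1 * b.2.1 - a.2.2 * b.2.2

/-- The Lorentzian cross product
`a ×_L b = (a₃b₂ − a₂b₃, a₁b₃ − a₃b₁, a₁b₂ − a₂b₁)`. -/
def lcross (a b : R3) : R3 :=
  (a.2.2 * b.2.1 - a.2.1 * b.2.2, a.1 * b.2.2 - a.2.2 * b.1, a.1 * b.2.1 - a.2.1 * b.1)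

/-- Partial derivative with respect to the first variable. -/
def pd1 {E : Type*} [NormedAddCommGroup E] [NormedSpace ℝ E]
    (f : ℝ × ℝ → E) (p : ℝ × ℝ) : E := fderiv ℝ f p (1, 0)

/-- Partial derivative with respect to the second variable. -/
def pd2 {E : Type*} [NormedAddCommGroup E] [NormedSpace ℝ E]
    (f : ℝ × ℝ → E) (p : ℝ × ℝ) : E := fderiv ℝ f p (0, 1)

def zx (z : ℝ × ℝ → ℝ) : ℝ × ℝ → ℝ := pd1 z
def zy (z : ℝ × ℝ → ℝ) : ℝ × ℝ → ℝ := pd2 z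
def zxx (z : ℝ × ℝ → ℝ) : ℝ × ℝ → ℝ := pd1 (zx z)
def zxy (z : ℝ × ℝ → ℝ) : ℝ × ℝ → ℝ := pd2 (zx z)
def zyy (z : ℝ × ℝ → ℝ) : ℝ × ℝ → ℝ := pd2 (zy z)

/-- Hessian determinant `z_xx z_yy − z_xy²`. -/
def hessDet (z : ℝ × ℝ → ℝ) (p : ℝ × ℝ) : ℝ := zxx z p * zyy z p - (zxy z p) ^ 2

/-- The punctured disk `{(x,y) : 0 < (x−x₀)² + (y−y₀)² < ρ²}`. -/
def PDisk (x₀ y₀ ρ : ℝ) : Set (ℝ × ℝ) :=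
  {p | 0 < (p.1 - x₀) ^ 2 + (p.2 - y₀) ^ 2 ∧ (p.1 - x₀) ^ 2 + (p.2 - y₀) ^ 2 < ρ ^ 2}

/-- `z` is an elliptic solution of the prescribed mean curvature equation for `H` on `U`,
with graph contained in `O`. -/
def IsEllSol (H : R3 → ℝ) (O : Set R3) (U : Set (ℝ × ℝ)) (z : ℝ × ℝ → ℝ) : Prop :=
  ContDiffOn ℝ 2 z U ∧
  (∀ p ∈ U, ((p.1, p.2, z p) : R3) ∈ O) ∧
  (∀ p ∈ U, (zx z p) ^ 2 + (zy z p) ^ 2 < 1) ∧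
  (∀ p ∈ U,
    (1 - (zy z p) ^ 2) * zxx z p + 2 * zx z p * zy z p * zxy z p
        + (1 - (zx z p) ^ 2) * zyy z p
      = 2 * H (p.1, p.2, z p) * (1 - (zx z p) ^ 2 - (zy z p) ^ 2) ^ ((3 : ℝ) / 2))

/-- The isolated singularity of `z` at `(x₀,y₀)` is removable: some `C²` function on a full
disk centered at `(x₀,y₀)` agrees with `z` on a punctured neighborhood. -/
def RemovableSing (x₀ y₀ : ℝ) (z : ℝ × ℝ → ℝ) : Prop :=
  ∃ ε > 0, ∃ Z : ℝ × ℝ → ℝ,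
    ContDiffOn ℝ 2 Z (ball ((x₀, y₀) : ℝ × ℝ) ε) ∧
    ∀ p ∈ ball ((x₀, y₀) : ℝ × ℝ) ε, p ≠ (x₀, y₀) → Z p = z p

/-- `H` is of class `C^{k,α}` on `O`: it is `C^k` and its `k`-th derivative is locally
`α`-Hölder on `O`. -/
def IsCkalpha (k : ℕ) (α : NNReal) (H : R3 → ℝ) (O : Set R3) : Prop :=
  ContDiffOn ℝ k H O ∧
  ∀ p ∈ O, ∃ ε > 0, ∃ C : NNReal,
    HolderOnWith C α (iteratedFDeriv ℝ k H) (ball p ε ∩ O)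

/-- The open strip `ℝ × (0,R)`. -/
def Strip (R : ℝ) : Set (ℝ × ℝ) := {p | 0 < p.2 ∧ p.2 < R}

/-- The open strip `ℝ × (−R,R)`. -/
def Strip2 (R : ℝ) : Set (ℝ × ℝ) := {p | -R < p.2 ∧ p.2 < R}

/-- The half-open strip `ℝ × [0,R)`. -/
def StripCl (R : ℝ) : Set (ℝ × ℝ) := {p | 0 ≤ p.2 ∧ p.2 < R}

/-- First two components of `ψ`: the planar projection `Π = (ψ₁, ψ₂)`. -/
def Pi2 (ψ : ℝ × ℝ → R3) (p : ℝ × ℝ) : ℝ × ℝ := ((ψ p).1, (ψ p).2.1)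

def comp1 (ψ : ℝ × ℝ → R3) : ℝ × ℝ → ℝ := fun p => (ψ p).1
def comp2 (ψ : ℝ × ℝ → R3) : ℝ × ℝ → ℝ := fun p => (ψ p).2.1
def comp3 (ψ : ℝ × ℝ → R3) : ℝ × ℝ → ℝ := fun p => (ψ p).2.2

/-- `ψ : ℝ × (0,R) → ℝ³` is a conformal parametrization of the graph of `z` near the
singularity `(x₀,y₀)`: it is 2π-periodic in `u`, its planar projection induces a
diffeomorphism with positive Jacobian from `(ℝ/2πℤ) × (0,R)` onto a punctured
neighborhood `W ⊆ Ω` of `(x₀,y₀)`, its third component is `z` of the first two, and the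
conformality conditions hold. -/
def IsConfParam (z : ℝ × ℝ → ℝ) (Ω : Set (ℝ × ℝ)) (x₀ y₀ R : ℝ)
    (ψ : ℝ × ℝ → R3) : Prop :=
  0 < R ∧
  ContDiffOn ℝ 1 ψ (Strip R) ∧
  (∀ u v : ℝ, ψ (u + 2 * π, v) = ψ (u, v)) ∧
  (∃ W : Set (ℝ × ℝ), W ⊆ Ω ∧ ((x₀, y₀) : ℝ × ℝ) ∉ W ∧
      insert ((x₀, y₀) : ℝ × ℝ) W ∈ nhds ((x₀, y₀) : ℝ × ℝ) ∧
      Pi2 ψ '' Strip R = W) ∧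
  (∀ p ∈ Strip R, ∀ q ∈ Strip R, Pi2 ψ p = Pi2 ψ q →
      p.2 = q.2 ∧ ∃ n : ℤ, p.1 - q.1 = 2 * π * n) ∧
  (∀ p ∈ Strip R,
      0 < pd1 (comp1 ψ) p * pd2 (comp2 ψ) p - pd2 (comp1 ψ) p * pd1 (comp2 ψ) p) ∧
  (∀ p ∈ Strip R, comp3 ψ p = z (Pi2 ψ p)) ∧
  (∀ p ∈ Strip R,
      lor (pd1 ψ p) (pd1 ψ p) = lor (pd2 ψ p) (pd2 ψ p) ∧
      0 < lor (pd1 ψ p) (pd1 ψ p) ∧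
      lor (pd1 ψ p) (pd2 ψ p) = 0)

/-- `ψ` extends real-analytically across `v = 0`, with `ψ(u,0) = p₀` and
`∂_vψ(u,0) = A(u)(cos u, −sin u, 1)`. -/
def ExtAnal (ψ : ℝ × ℝ → R3) (R : ℝ) (p₀ : R3) (A : ℝ → ℝ) : Prop :=
  ∃ ε > 0, ∃ Ψ : ℝ × ℝ → R3,
    AnalyticOnNhd ℝ Ψ {p : ℝ × ℝ | -ε < p.2 ∧ p.2 < R} ∧
    (∀ p ∈ Strip R, Ψ p = ψ p) ∧
    (∀ u : ℝ, Ψ (u, 0) = p₀) ∧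
    (∀ u : ℝ, pd2 Ψ (u, 0) = (A u * Real.cos u, -(A u * Real.sin u), A u))

/-- The class `𝒜₂` of 2π-periodic, real-analytic, nowhere vanishing functions. -/
def MemA2 (A : ℝ → ℝ) : Prop :=
  AnalyticOnNhd ℝ A univ ∧ (∀ u : ℝ, A (u + 2 * π) = A u) ∧ ∀ u : ℝ, A u ≠ 0

/-- The class `𝒜₁`: elliptic solutions on a punctured disk of radius `ρ` centered at
`(x₀,y₀)`, extending continuously with value `z₀`, whose Hessian determinant is
nonvanishing on a punctured neighborhood of `(x₀,y₀)`. -/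
def MemA1 (H : R3 → ℝ) (O : Set R3) (x₀ y₀ z₀ ρ : ℝ) (z : ℝ × ℝ → ℝ) : Prop :=
  0 < ρ ∧ IsEllSol H O (PDisk x₀ y₀ ρ) z ∧
  Tendsto z (nhdsWithin ((x₀, y₀) : ℝ × ℝ) (PDisk x₀ y₀ ρ)) (nhds z₀) ∧
  ∃ ε : ℝ, 0 < ε ∧ ε ≤ ρ ∧ ∀ p ∈ PDisk x₀ y₀ ε, hessDet z p ≠ 0

/-- `z` corresponds to `A`: some conformal parametrization of the graph of `z` near the
singularity extends real-analytically across `v = 0` with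
`∂_vψ(u,0) = A(u)(cos u, −sin u, 1)`. -/
def Corr (z : ℝ × ℝ → ℝ) (x₀ y₀ z₀ ρ : ℝ) (A : ℝ → ℝ) : Prop :=
  ∃ R : ℝ, ∃ ψ : ℝ × ℝ → R3,
    IsConfParam z (PDisk x₀ y₀ ρ) x₀ y₀ R ψ ∧ ExtAnal ψ R ((x₀, y₀, z₀) : R3) A

/-- The induced (first fundamental form) metric of the graph of `z`,
`ds² = (1−z_x²)dx² − 2 z_x z_y dx dy + (1−z_y²)dy²`, as a bilinear form. -/
def dsq (z : ℝ × ℝ → ℝ) (p : ℝ × ℝ) (ξ η : ℝ × ℝ) : ℝ :=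
  (1 - (zx z p) ^ 2) * ξ.1 * η.1 - zx z p * zy z p * (ξ.1 * η.2 + ξ.2 * η.1)
    + (1 - (zy z p) ^ 2) * ξ.2 * η.2

/-- `(Ω, ds²)` is conformally equivalent to the planar domain `D`: there is a `C¹`
diffeomorphism `Φ : Ω → D` and a positive function `λ` with
`⟨DΦ(ξ), DΦ(η)⟩_euc = λ · ds²(ξ,η)`. -/
def ConfEquiv (z : ℝ × ℝ → ℝ) (Ω D : Set (ℝ × ℝ)) : Prop :=
  ∃ (Φ : ℝ × ℝ → ℝ × ℝ) (Φinv : ℝ × ℝ → ℝ × ℝ) (lam : ℝ × ℝ → ℝ),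
    ContDiffOn ℝ 1 Φ Ω ∧ ContDiffOn ℝ 1 Φinv D ∧
    (∀ p ∈ Ω, Φ p ∈ D ∧ Φinv (Φ p) = p) ∧
    (∀ q ∈ D, Φinv q ∈ Ω ∧ Φ (Φinv q) = q) ∧
    (∀ p ∈ Ω, 0 < lam p ∧
      ∀ ξ η : ℝ × ℝ, (fderiv ℝ Φ p ξ).1 * (fderiv ℝ Φ p η).1
          + (fderiv ℝ Φ p ξ).2 * (fderiv ℝ Φ p η).2 = lam p * dsq z p ξ η)

def lf1 : R3 →L[ℝ] ℝ := ContinuousLinearMap.fst ℝ ℝ (ℝ × ℝ)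
def lf2 : R3 →L[ℝ] ℝ := (ContinuousLinearMap.fst ℝ ℝ ℝ).comp (ContinuousLinearMap.snd ℝ ℝ (ℝ × ℝ))
def lf3 : R3 →L[ℝ] ℝ := (ContinuousLinearMap.snd ℝ ℝ ℝ).comp (ContinuousLinearMap.snd ℝ ℝ (ℝ × ℝ))
def lorCLM : R3 →L[ℝ] R3 →L[ℝ] ℝ := lf1.smulRight lf1 + lf2.smulRight lf2 - lf3.smulRight lf3

lemma lorCLM_apply (a b : R3) : lorCLM a b = lor a b := by
  simp [lorCLM, lf1, lf2, lf3, lor, smul_eq_mul]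

lemma lor_comm' (a b : R3) : lor a b = lor b a := by simp [lor]; ring

lemma lor_add_left (a b c : R3) : lor (a + b) c = lor a c + lor b c := by
  simp [lor]; ring

lemma lor_smul_lcross_left (c : ℝ) (a b : R3) : lor (c • lcross a b) a = 0 := by
  simp [lor, lcross, smul_eq_mul]; ring

lemma lor_smul_lcross_right (c : ℝ) (a b : R3) : lor (c • lcross a b) b = 0 := by
  simp [lor, lcross, smul_eq_mul]; ring

lemma hasFDerivAt_lor {a b : ℝ × ℝ → R3} {A B : (ℝ × ℝ) →L[ℝ] R3} {p : ℝ × ℝ}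
    (ha : HasFDerivAt a A p) (hb : HasFDerivAt b B p) :
    HasFDerivAt (fun q => lor (a q) (b q))
      ((lorCLM (a p)).comp B + (lorCLM.comp A).flip (b p)) p := by
  have h := HasFDerivAt.clm_apply (lorCLM.hasFDerivAt.comp p ha) hb
  exact h.congr_of_eventuallyEq
    (Filter.Eventually.of_forall fun q => (lorCLM_apply _ _).symm)

/-- holomorphicity of the Hopf-type differential: for a `C²` solution
of `ψ_uu + ψ_vv = 2ℋ(ψ) ψ_u ×_L ψ_v` on an open `U`, the function
`Q(u+iv) = (⟨ψ_u,ψ_u⟩_L − ⟨ψ_v,ψ_v⟩_L) − 2i⟨ψ_u,ψ_v⟩_L` is holomorphic on `U`. -/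
theorem stmt11 (U : Set (ℝ × ℝ)) (H : R3 → ℝ) (ψ : ℝ × ℝ → R3)
    (hU : IsOpen U) (hH : Continuous H)
    (hψ : ContDiffOn ℝ 2 ψ U)
    (hsys : ∀ p ∈ U,
      pd1 (pd1 ψ) p + pd2 (pd2 ψ) p = (2 * H (ψ p)) • lcross (pd1 ψ p) (pd2 ψ p)) :
    DifferentiableOn ℂ
      (fun w : ℂ =>
        (((lor (pd1 ψ (w.re, w.im)) (pd1 ψ (w.re, w.im))
            - lor (pd2 ψ (w.re, w.im)) (pd2 ψ (w.re, w.im)) : ℝ) : ℂ)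
          - 2 * Complex.I * ((lor (pd1 ψ (w.re, w.im)) (pd2 ψ (w.re, w.im)) : ℝ) : ℂ)))
      {w : ℂ | ((w.re, w.im) : ℝ × ℝ) ∈ U} := by
  intro w hw
  apply DifferentiableAt.differentiableWithinAt
  have hp : ((w.re, w.im) : ℝ × ℝ) ∈ U := hw
  set p : ℝ × ℝ := (w.re, w.im) with hpdef
  set e1 : ℝ × ℝ := (1, 0) with he1
  set e2 : ℝ × ℝ := (0, 1) with he2
  -- derivative of the first derivative
  have hφC : ContDiffOn ℝ 1 (fderiv ℝ ψ) U := hψ.fderiv_of_isOpen hU (by norm_num)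
  have hT : HasFDerivAt (fderiv ℝ ψ) (fderiv ℝ (fderiv ℝ ψ) p) p :=
    ((hφC.contDiffAt (hU.mem_nhds hp)).differentiableAt one_ne_zero).hasFDerivAt
  set T := fderiv ℝ (fderiv ℝ ψ) p with hTdef
  set A : (ℝ × ℝ) →L[ℝ] R3 := (ContinuousLinearMap.apply ℝ R3 e1).comp T with hA
  set B : (ℝ × ℝ) →L[ℝ] R3 := (ContinuousLinearMap.apply ℝ R3 e2).comp T with hB
  have ha : HasFDerivAt (pd1 ψ) A p :=
    (ContinuousLinearMap.apply ℝ R3 e1).hasFDerivAt.comp p hT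
  have hb : HasFDerivAt (pd2 ψ) B p :=
    (ContinuousLinearMap.apply ℝ R3 e2).hasFDerivAt.comp p hT
  have hsym : A e2 = B e1 := by
    have h := (hψ.contDiffAt (hU.mem_nhds hp)).isSymmSndFDerivAt (by norm_num)
    simpa [hA, hB, hTdef] using h e2 e1
  set α : R3 := pd1 ψ p with hα
  set β : R3 := pd2 ψ p with hβ
  -- PDE at p, rewritten in terms of A, B
  have h11 : pd1 (pd1 ψ) p = A e1 := by rw [pd1, ha.fderiv]
  have h22 : pd2 (pd2 ψ) p = B e2 := by rw [pd2, hb.fderiv]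
  have hPDE : A e1 + B e2 = (2 * H (ψ p)) • lcross α β := by
    rw [← h11, ← h22]; exact hsys p hp
  have hzα : lor (A e1) α + lor (B e2) α = 0 := by
    rw [← lor_add_left, hPDE]; exact lor_smul_lcross_left _ _ _
  have hzβ : lor (A e1) β + lor (B e2) β = 0 := by
    rw [← lor_add_left, hPDE]; exact lor_smul_lcross_right _ _ _
  -- derivative of g
  have hLa := hasFDerivAt_lor ha ha
  have hLb := hasFDerivAt_lor hb hb
  have hLs := hasFDerivAt_lor ha hb
  set DP : (ℝ × ℝ) →L[ℝ] ℝ :=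
      ((lorCLM α).comp A + (lorCLM.comp A).flip α)
        - ((lorCLM β).comp B + (lorCLM.comp B).flip β) with hDP
  set DS : (ℝ × ℝ) →L[ℝ] ℝ := (lorCLM α).comp B + (lorCLM.comp A).flip β with hDS
  set g : ℝ × ℝ → ℂ := fun q =>
      (((lor (pd1 ψ q) (pd1 ψ q) - lor (pd2 ψ q) (pd2 ψ q) : ℝ)) : ℂ)
        - 2 * Complex.I * ((lor (pd1 ψ q) (pd2 ψ q) : ℝ) : ℂ) with hg
  set G : (ℝ × ℝ) →L[ℝ] ℂ :=
      Complex.ofRealCLM.comp DP - (2 * Complex.I) • (Complex.ofRealCLM.comp DS) with hG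
  have hgG : HasFDerivAt g G p := by
    have h1 : HasFDerivAt (fun q : ℝ × ℝ =>
        ((lor (pd1 ψ q) (pd1 ψ q) - lor (pd2 ψ q) (pd2 ψ q) : ℝ) : ℂ))
        (Complex.ofRealCLM.comp DP) p :=
      Complex.ofRealCLM.hasFDerivAt.comp p (hLa.sub hLb)
    have h2 : HasFDerivAt (fun q : ℝ × ℝ =>
        2 * Complex.I * ((lor (pd1 ψ q) (pd2 ψ q) : ℝ) : ℂ))
        ((2 * Complex.I) • (Complex.ofRealCLM.comp DS)) p :=
      (Complex.ofRealCLM.hasFDerivAt.comp p hLs).const_mul _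
    exact h1.sub h2
  -- values of G
  have hGval : ∀ v : ℝ × ℝ, G v =
      ((lor α (A v) + lor (A v) α - (lor β (B v) + lor (B v) β) : ℝ) : ℂ)
        - 2 * Complex.I * ((lor α (B v) + lor (A v) β : ℝ) : ℂ) := by
    intro v
    simp [hG, hDP, hDS, ContinuousLinearMap.sub_apply, ContinuousLinearMap.add_apply,
      ContinuousLinearMap.comp_apply, ContinuousLinearMap.flip_apply,
      ContinuousLinearMap.smul_apply, lorCLM_apply, smul_eq_mul]
    ring
  set c : ℂ := G e1 with hc
  have key : G e2 = Complex.I * c := by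
    rw [hc, hGval e1, hGval e2, hsym]
    have h1 : lor (B e2) α = - lor (A e1) α := by linarith
    have h2 : lor (B e2) β = - lor (A e1) β := by linarith
    rw [lor_comm' α (B e1), lor_comm' α (B e2), lor_comm' β (B e1), lor_comm' β (B e2),
      h1, h2, lor_comm' α (A e1)]
    push_cast
    ring_nf
    rw [Complex.I_sq]
    ring
  have hlin : ∀ z : ℂ, G (z.re, z.im) = z * c := by
    intro z
    have hz : ((z.re, z.im) : ℝ × ℝ) = z.re • e1 + z.im • e2 := by
      simp [he1, he2, Prod.ext_iff]
    rw [hz, map_add, G.map_smul, G.map_smul, key]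
    rw [← hc]
    simp only [Complex.real_smul]
    rw [show (z.re : ℂ) * c + (z.im : ℂ) * (Complex.I * c) = ((z.re : ℂ) + (z.im : ℂ) * Complex.I) * c by ring,
      Complex.re_add_im]
  -- assemble the complex derivative
  have hfR : HasFDerivAt (fun w : ℂ => g (w.re, w.im))
      (G.comp (Complex.equivRealProdCLM : ℂ ≃L[ℝ] ℝ × ℝ).toContinuousLinearMap) w := by
    have heq : HasFDerivAt (fun w : ℂ => ((w.re, w.im) : ℝ × ℝ))
        (Complex.equivRealProdCLM : ℂ ≃L[ℝ] ℝ × ℝ).toContinuousLinearMap w :=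
      (Complex.equivRealProdCLM : ℂ ≃L[ℝ] ℝ × ℝ).toContinuousLinearMap.hasFDerivAt
    exact hgG.comp w heq
  have hM : ((ContinuousLinearMap.id ℂ ℂ).smulRight c).restrictScalars ℝ =
      G.comp (Complex.equivRealProdCLM : ℂ ≃L[ℝ] ℝ × ℝ).toContinuousLinearMap := by
    apply ContinuousLinearMap.ext
    intro z
    simp [ContinuousLinearMap.smulRight_apply, Complex.equivRealProdCLM_apply]
    rw [hlin z]
  have hfC : HasFDerivAt (𝕜 := ℂ) (fun w : ℂ => g (w.re, w.im))
      ((ContinuousLinearMap.id ℂ ℂ).smulRight c) w :=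
    hasFDerivAt_of_restrictScalars ℝ hfR hM
  exact hfC.differentiableAt
end
end

section
/- Let ℋ be a real-analytic function on an open set O ⊆ ℝ³ and let ψ₁, ψ₂: ℝ × (−R,R) → O be real-analytic maps, both satisfying the system ψ_uu + ψ_vv = 2 ℋ(ψ) ψ_u ×_L ψ_v on ℝ × (−R,R), and having the same Cauchy data on the real axis: ψ₁(u,0) = ψ₂(u,0) and ∂_vψ₁(u,0) = ∂_vψ₂(u,0) for all u ∈ ℝ. Then ψ₁ = ψ₂ on all of ℝ × (−R,R). -/
/-!
On the axis `v = 0` the equation `ψ_vv = T(ψ, ψ_u, ψ_v) - ψ_uu` expresses `∂_v^(n+2) ψ` through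
`v`-derivatives of order at most `n + 1` on the axis and their `u`-derivatives (mixed partials of
an analytic map commute), and the `n`-th `v`-derivative of `T(ψ, ψ_u, ψ_v)` only depends on the
`v`-derivatives of order at most `n` of its arguments (Faà di Bruno). By strong induction the
Cauchy data therefore determine every `∂_v^n ψ(u, 0)`, and an analytic function on the interval
`(-R, R)` is determined by its Taylor coefficients at `0`.
-/

noncomputable section

open Real Set Metric Filter MeasureTheory

open scoped ContDiff Topology

theorem isOpen_strip2 (R : ℝ) : IsOpen (Strip2 R) :=
  isOpen_Ioo.preimage continuous_snd

section Jets

variable {𝕜 E F : Type*} [NontriviallyNormedField 𝕜]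
  [NormedAddCommGroup E] [NormedSpace 𝕜 E] [NormedAddCommGroup F] [NormedSpace 𝕜 F]
  {f : 𝕜 → E} {g : 𝕜 → F} {x : 𝕜} {n : ℕ}

theorem iteratedDeriv_prodMk (hf : ContDiffAt 𝕜 n f x) (hg : ContDiffAt 𝕜 n g x) :
    iteratedDeriv n (fun t => (f t, g t)) x = (iteratedDeriv n f x, iteratedDeriv n g x) := by
  simp [iteratedDeriv_eq_iteratedFDeriv, iteratedFDeriv_prodMk hf hg le_rfl]

theorem iteratedDeriv_comp_eq_of_iteratedDeriv_eq {T : E → F} {φ₁ φ₂ : 𝕜 → E}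
    (hT : ContDiffAt 𝕜 n T (φ₁ x)) (hφ₁ : ContDiffAt 𝕜 n φ₁ x) (hφ₂ : ContDiffAt 𝕜 n φ₂ x)
    (h : ∀ j ≤ n, iteratedDeriv j φ₁ x = iteratedDeriv j φ₂ x) :
    iteratedDeriv n (T ∘ φ₁) x = iteratedDeriv n (T ∘ φ₂) x := by
  have h₀ : φ₁ x = φ₂ x := by simpa using h 0 n.zero_le
  rw [iteratedDeriv_vcomp_eq_sum_orderedFinpartition hT hφ₁ le_rfl,
    iteratedDeriv_vcomp_eq_sum_orderedFinpartition (h₀ ▸ hT) hφ₂ le_rfl, h₀]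
  refine Finset.sum_congr rfl fun c _ => ?_
  congr 1
  funext j
  exact h _ (c.partSize_le j)

theorem AnalyticAt.eventuallyEq_of_iteratedDeriv_eq [CharZero 𝕜] [CompleteSpace E]
    {f₁ f₂ : 𝕜 → E} (hf₁ : AnalyticAt 𝕜 f₁ x) (hf₂ : AnalyticAt 𝕜 f₂ x)
    (h : ∀ n, iteratedDeriv n f₁ x = iteratedDeriv n f₂ x) : f₁ =ᶠ[𝓝 x] f₂ := by
  have htop : analyticOrderAt (f₁ - f₂) x = ⊤ :=
    ENat.eq_top_iff_forall_ge.2 fun n =>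
      (natCast_le_analyticOrderAt_iff_iteratedDeriv_eq_zero (hf₁.sub hf₂)).2 fun i _ => by
        rw [iteratedDeriv_sub hf₁.contDiffAt hf₂.contDiffAt, h, sub_self]
  filter_upwards [analyticOrderAt_eq_top.1 htop] with y hy
  exact sub_eq_zero.1 hy

end Jets

section PartialDerivatives

variable {E : Type*} [NormedAddCommGroup E] [NormedSpace ℝ E]
  {f g : ℝ × ℝ → E} {U : Set (ℝ × ℝ)} {u v : ℝ}

theorem hasDerivAt_horizontal_slice (hf : DifferentiableAt ℝ f (u, v)) :
    HasDerivAt (fun t => f (t, v)) (pd1 f (u, v)) u :=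
  hf.hasFDerivAt.comp_hasDerivAt u ((hasDerivAt_id u).prodMk (hasDerivAt_const u v))

theorem hasDerivAt_vertical_slice (hf : DifferentiableAt ℝ f (u, v)) :
    HasDerivAt (fun t => f (u, t)) (pd2 f (u, v)) v :=
  hf.hasFDerivAt.comp_hasDerivAt v ((hasDerivAt_const v u).prodMk (hasDerivAt_id v))

theorem pd1_eq_of_eq_on_horizontal_line (hf : ∀ u, DifferentiableAt ℝ f (u, v))
    (hg : ∀ u, DifferentiableAt ℝ g (u, v)) (h : ∀ u, f (u, v) = g (u, v)) (u : ℝ) :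
    pd1 f (u, v) = pd1 g (u, v) := by
  rw [← (hasDerivAt_horizontal_slice (hf u)).deriv, ← (hasDerivAt_horizontal_slice (hg u)).deriv]
  simp_rw [h]

theorem IsOpen.eventually_vertical_mem (hU : IsOpen U) (hp : (u, v) ∈ U) :
    ∀ᶠ t in 𝓝 v, (u, t) ∈ U :=
  (Continuous.prodMk_right u).continuousAt.preimage_mem_nhds (hU.mem_nhds hp)

theorem AnalyticAt.vertical_slice (hf : AnalyticAt ℝ f (u, v)) :
    AnalyticAt ℝ (fun t => f (u, t)) v :=
  hf.comp (analyticAt_const.prod analyticAt_id)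

theorem Set.EqOn.pd1_eqOn (hU : IsOpen U) (h : EqOn f g U) : EqOn (pd1 f) (pd1 g) U :=
  fun p hp => by rw [pd1, pd1, (h.eventuallyEq_of_mem (hU.mem_nhds hp)).fderiv_eq]

theorem Set.EqOn.pd2_eqOn (hU : IsOpen U) (h : EqOn f g U) : EqOn (pd2 f) (pd2 g) U :=
  fun p hp => by rw [pd2, pd2, (h.eventuallyEq_of_mem (hU.mem_nhds hp)).fderiv_eq]

theorem Set.EqOn.iterate_pd2_eqOn (hU : IsOpen U) (h : EqOn f g U) (n : ℕ) :
    EqOn (pd2^[n] f) (pd2^[n] g) U := by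
  induction n generalizing f g with
  | zero => exact h
  | succ n ih => exact ih (h.pd2_eqOn hU)

variable [CompleteSpace E]

theorem AnalyticOnNhd.analyticOnNhd_pd1 (hf : AnalyticOnNhd ℝ f U) : AnalyticOnNhd ℝ (pd1 f) U :=
  fun p hp =>
    ((ContinuousLinearMap.apply ℝ E ((1 : ℝ), (0 : ℝ))).analyticAt _).comp (hf.fderiv p hp)

theorem AnalyticOnNhd.analyticOnNhd_pd2 (hf : AnalyticOnNhd ℝ f U) : AnalyticOnNhd ℝ (pd2 f) U :=
  fun p hp =>
    ((ContinuousLinearMap.apply ℝ E ((0 : ℝ), (1 : ℝ))).analyticAt _).comp (hf.fderiv p hp)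

theorem AnalyticOnNhd.analyticOnNhd_iterate_pd2 (hf : AnalyticOnNhd ℝ f U) (n : ℕ) :
    AnalyticOnNhd ℝ (pd2^[n] f) U := by
  induction n generalizing f with
  | zero => exact hf
  | succ n ih => exact ih hf.analyticOnNhd_pd2

theorem AnalyticAt.pd2_pd1 {p : ℝ × ℝ} (hf : AnalyticAt ℝ f p) :
    pd2 (pd1 f) p = pd1 (pd2 f) p := by
  have hdiff : DifferentiableAt ℝ (fderiv ℝ f) p := hf.fderiv.differentiableAt
  have hsymm : IsSymmSndFDerivAt ℝ f p :=
    (hf.contDiffAt (n := 2)).isSymmSndFDerivAt (by simp [minSmoothness_of_isRCLikeNormedField])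
  have hswap (a b : ℝ × ℝ) :
      fderiv ℝ (fun q => fderiv ℝ f q a) p b = fderiv ℝ (fderiv ℝ f) p b a := by
    simp [fderiv_clm_apply hdiff (differentiableAt_const a)]
  exact (hswap _ _).trans ((hsymm _ _).trans (hswap _ _).symm)

theorem AnalyticOnNhd.iterate_pd2_pd1 (hU : IsOpen U) (hf : AnalyticOnNhd ℝ f U) (n : ℕ) :
    EqOn (pd2^[n] (pd1 f)) (pd1 (pd2^[n] f)) U := by
  induction n generalizing f with
  | zero => exact fun _ _ => rfl
  | succ n ih =>
    have hcomm : EqOn (pd2 (pd1 f)) (pd1 (pd2 f)) U := fun p hp => (hf p hp).pd2_pd1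
    exact (hcomm.iterate_pd2_eqOn hU n).trans (ih hf.analyticOnNhd_pd2)

theorem AnalyticOnNhd.iterate_pd2_add (hU : IsOpen U) (hf : AnalyticOnNhd ℝ f U)
    (hg : AnalyticOnNhd ℝ g U) (n : ℕ) :
    EqOn (pd2^[n] (fun q => f q + g q)) (fun q => pd2^[n] f q + pd2^[n] g q) U := by
  induction n generalizing f g with
  | zero => exact fun _ _ => rfl
  | succ n ih =>
    have hadd : EqOn (pd2 (fun q => f q + g q)) (fun q => pd2 f q + pd2 g q) U := fun q hq => by
      simp [pd2, fderiv_fun_add (hf q hq).differentiableAt (hg q hq).differentiableAt]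
    exact (hadd.iterate_pd2_eqOn hU n).trans (ih hf.analyticOnNhd_pd2 hg.analyticOnNhd_pd2)

theorem AnalyticOnNhd.iteratedDeriv_vertical_slice (hU : IsOpen U) (hf : AnalyticOnNhd ℝ f U)
    (n : ℕ) (hp : (u, v) ∈ U) :
    iteratedDeriv n (fun t => f (u, t)) v = pd2^[n] f (u, v) := by
  induction n generalizing f with
  | zero => rfl
  | succ n ih =>
    have hderiv : deriv (fun t => f (u, t)) =ᶠ[𝓝 v] fun t => pd2 f (u, t) := by
      filter_upwards [hU.eventually_vertical_mem hp] with t ht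
      exact (hasDerivAt_vertical_slice (hf _ ht).differentiableAt).deriv
    rw [iteratedDeriv_succ', hderiv.iteratedDeriv_eq, ih hf.analyticOnNhd_pd2]
    rfl

theorem AnalyticOnNhd.iterate_pd2_add_two (hU : IsOpen U) (hf : AnalyticOnNhd ℝ f U) (n : ℕ)
    {p : ℝ × ℝ} (hp : p ∈ U) :
    pd2^[n + 2] f p
      = pd2^[n] (fun q => pd1 (pd1 f) q + pd2 (pd2 f) q) p - pd1 (pd1 (pd2^[n] f)) p := by
  have hsum := hf.analyticOnNhd_pd1.analyticOnNhd_pd1.iterate_pd2_add hU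
    hf.analyticOnNhd_pd2.analyticOnNhd_pd2 n hp
  have hcomm : pd2^[n] (pd1 (pd1 f)) p = pd1 (pd1 (pd2^[n] f)) p :=
    (hf.analyticOnNhd_pd1.iterate_pd2_pd1 hU n hp).trans
      ((hf.iterate_pd2_pd1 hU n).pd1_eqOn hU hp)
  simp only [hsum, hcomm, Function.iterate_succ_apply]
  abel

end PartialDerivatives

theorem contDiff_lcross {n : WithTop ℕ∞} : ContDiff ℝ n (fun w : R3 × R3 => lcross w.1 w.2) := by
  unfold lcross
  fun_prop

section CauchyProblem

variable {E : Type*} [NormedAddCommGroup E] [NormedSpace ℝ E] [CompleteSpace E]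
  {U : Set (ℝ × ℝ)} {T : E × E × E → E} {ψ ψ₁ ψ₂ : ℝ × ℝ → E} {u v : ℝ}

def oneJet (ψ : ℝ × ℝ → E) (p : ℝ × ℝ) : E × E × E := (ψ p, pd1 ψ p, pd2 ψ p)

theorem AnalyticOnNhd.analyticOnNhd_oneJet (hψ : AnalyticOnNhd ℝ ψ U) :
    AnalyticOnNhd ℝ (oneJet ψ) U :=
  fun p hp => (hψ p hp).prod ((hψ.analyticOnNhd_pd1 p hp).prod (hψ.analyticOnNhd_pd2 p hp))

theorem AnalyticOnNhd.iteratedDeriv_oneJet_vertical_slice (hU : IsOpen U)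
    (hψ : AnalyticOnNhd ℝ ψ U) (n : ℕ) (hp : (u, v) ∈ U) :
    iteratedDeriv n (fun t => oneJet ψ (u, t)) v
      = (pd2^[n] ψ (u, v), pd1 (pd2^[n] ψ) (u, v), pd2^[n + 1] ψ (u, v)) := by
  have h₀ := (hψ _ hp).vertical_slice.contDiffAt (n := n)
  have h₁ := (hψ.analyticOnNhd_pd1 _ hp).vertical_slice.contDiffAt (n := n)
  have h₂ := (hψ.analyticOnNhd_pd2 _ hp).vertical_slice.contDiffAt (n := n)
  simp only [oneJet]
  rw [iteratedDeriv_prodMk h₀ (h₁.prodMk h₂), iteratedDeriv_prodMk h₁ h₂,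
    hψ.iteratedDeriv_vertical_slice hU n hp,
    hψ.analyticOnNhd_pd1.iteratedDeriv_vertical_slice hU n hp,
    hψ.analyticOnNhd_pd2.iteratedDeriv_vertical_slice hU n hp,
    hψ.iterate_pd2_pd1 hU n hp, Function.iterate_succ_apply]

theorem iterate_pd2_add_two_of_pde (hU : IsOpen U) (hψ : AnalyticOnNhd ℝ ψ U)
    (hpde : ∀ p ∈ U, pd1 (pd1 ψ) p + pd2 (pd2 ψ) p = T (oneJet ψ p)) (n : ℕ) (hp : (u, v) ∈ U) :
    pd2^[n + 2] ψ (u, v)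
      = iteratedDeriv n (T ∘ fun t => oneJet ψ (u, t)) v - pd1 (pd1 (pd2^[n] ψ)) (u, v) := by
  have hΔ : AnalyticOnNhd ℝ (fun q => pd1 (pd1 ψ) q + pd2 (pd2 ψ) q) U :=
    fun q hq => (hψ.analyticOnNhd_pd1.analyticOnNhd_pd1 q hq).add
      (hψ.analyticOnNhd_pd2.analyticOnNhd_pd2 q hq)
  have hslice : (fun t => pd1 (pd1 ψ) (u, t) + pd2 (pd2 ψ) (u, t))
      =ᶠ[𝓝 v] T ∘ fun t => oneJet ψ (u, t) := by
    filter_upwards [hU.eventually_vertical_mem hp] with t ht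
    exact hpde _ ht
  rw [hψ.iterate_pd2_add_two hU n hp, ← hΔ.iteratedDeriv_vertical_slice hU n hp,
    hslice.iteratedDeriv_eq]

variable (hU : IsOpen U) (hax : ∀ u, (u, (0 : ℝ)) ∈ U)
  (hψ₁ : AnalyticOnNhd ℝ ψ₁ U) (hψ₂ : AnalyticOnNhd ℝ ψ₂ U)
  (hT : ∀ u, ContDiffAt ℝ ∞ T (oneJet ψ₁ (u, 0)))
  (hpde₁ : ∀ p ∈ U, pd1 (pd1 ψ₁) p + pd2 (pd2 ψ₁) p = T (oneJet ψ₁ p))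
  (hpde₂ : ∀ p ∈ U, pd1 (pd1 ψ₂) p + pd2 (pd2 ψ₂) p = T (oneJet ψ₂ p))
include hU hax hψ₁ hψ₂ hT hpde₁ hpde₂

theorem iterate_pd2_add_two_eq_on_axis (m : ℕ)
    (ih : ∀ j ≤ m + 1, ∀ u, pd2^[j] ψ₁ (u, 0) = pd2^[j] ψ₂ (u, 0)) (u : ℝ) :
    pd2^[m + 2] ψ₁ (u, 0) = pd2^[m + 2] ψ₂ (u, 0) := by
  have hpd1 : ∀ j ≤ m + 1, ∀ u, pd1 (pd2^[j] ψ₁) (u, 0) = pd1 (pd2^[j] ψ₂) (u, 0) :=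
    fun j hj => pd1_eq_of_eq_on_horizontal_line
      (fun u => (hψ₁.analyticOnNhd_iterate_pd2 j _ (hax u)).differentiableAt)
      (fun u => (hψ₂.analyticOnNhd_iterate_pd2 j _ (hax u)).differentiableAt) (ih j hj)
  have hpd11 : pd1 (pd1 (pd2^[m] ψ₁)) (u, 0) = pd1 (pd1 (pd2^[m] ψ₂)) (u, 0) :=
    pd1_eq_of_eq_on_horizontal_line
      (fun u => ((hψ₁.analyticOnNhd_iterate_pd2 m).analyticOnNhd_pd1 _ (hax u)).differentiableAt)
      (fun u => ((hψ₂.analyticOnNhd_iterate_pd2 m).analyticOnNhd_pd1 _ (hax u)).differentiableAt)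
      (hpd1 m (by omega)) u
  have hjet : ∀ j ≤ m, iteratedDeriv j (fun t => oneJet ψ₁ (u, t)) 0
      = iteratedDeriv j (fun t => oneJet ψ₂ (u, t)) 0 := by
    intro j hj
    rw [hψ₁.iteratedDeriv_oneJet_vertical_slice hU j (hax u),
      hψ₂.iteratedDeriv_oneJet_vertical_slice hU j (hax u),
      ih j (by omega), hpd1 j (by omega), ih (j + 1) (by omega)]
  have hslice (ψ : ℝ × ℝ → E) (hψ : AnalyticOnNhd ℝ ψ U) :
      ContDiffAt ℝ m (fun t => oneJet ψ (u, t)) 0 :=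
    (hψ.analyticOnNhd_oneJet _ (hax u)).vertical_slice.contDiffAt
  rw [iterate_pd2_add_two_of_pde hU hψ₁ hpde₁ m (hax u),
    iterate_pd2_add_two_of_pde hU hψ₂ hpde₂ m (hax u),
    iteratedDeriv_comp_eq_of_iteratedDeriv_eq ((hT u).of_le (mod_cast le_top))
      (hslice ψ₁ hψ₁) (hslice ψ₂ hψ₂) hjet, hpd11]

theorem iterate_pd2_eq_on_axis (h₀ : ∀ u, ψ₁ (u, 0) = ψ₂ (u, 0))
    (h₁ : ∀ u, pd2 ψ₁ (u, 0) = pd2 ψ₂ (u, 0)) (n : ℕ) :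
    ∀ u, pd2^[n] ψ₁ (u, 0) = pd2^[n] ψ₂ (u, 0) := by
  induction n using Nat.strong_induction_on with
  | _ n ih =>
    match n with
    | 0 => exact h₀
    | 1 => exact h₁
    | m + 2 =>
      exact iterate_pd2_add_two_eq_on_axis hU hax hψ₁ hψ₂ hT hpde₁ hpde₂ m
        (fun j hj => ih j (by omega))

end CauchyProblem

theorem eqOn_strip2_of_iterate_pd2_eq_on_axis {E : Type*} [NormedAddCommGroup E]
    [NormedSpace ℝ E] [CompleteSpace E] {R : ℝ} {f g : ℝ × ℝ → E} (hR : 0 < R)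
    (hf : AnalyticOnNhd ℝ f (Strip2 R)) (hg : AnalyticOnNhd ℝ g (Strip2 R))
    (h : ∀ n u, pd2^[n] f (u, 0) = pd2^[n] g (u, 0)) : EqOn f g (Strip2 R) := by
  rintro ⟨u, v⟩ hv
  have hline : MapsTo (fun t => (u, t)) (Ioo (-R) R) (Strip2 R) := fun _ ht => ht
  have h0 : (0 : ℝ) ∈ Ioo (-R) R := ⟨neg_lt_zero.2 hR, hR⟩
  have hf' : AnalyticOnNhd ℝ (fun t => f (u, t)) (Ioo (-R) R) :=
    fun t ht => (hf _ (hline ht)).vertical_slice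
  have hg' : AnalyticOnNhd ℝ (fun t => g (u, t)) (Ioo (-R) R) :=
    fun t ht => (hg _ (hline ht)).vertical_slice
  refine hf'.eqOn_of_preconnected_of_eventuallyEq hg' isPreconnected_Ioo h0 ?_ hv
  refine (hf' 0 h0).eventuallyEq_of_iteratedDeriv_eq (hg' 0 h0) fun n => ?_
  rw [hf.iteratedDeriv_vertical_slice (isOpen_strip2 R) n (hline h0),
    hg.iteratedDeriv_vertical_slice (isOpen_strip2 R) n (hline h0), h n u]

theorem stmt12_general (O : Set R3) (R : ℝ) (H : R3 → ℝ) (ψ₁ ψ₂ : ℝ × ℝ → R3)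
    (hR : 0 < R) (hHa : AnalyticOnNhd ℝ H O)
    (hψ₁O : ∀ p ∈ Strip2 R, ψ₁ p ∈ O)
    (hψ₁a : AnalyticOnNhd ℝ ψ₁ (Strip2 R)) (hψ₂a : AnalyticOnNhd ℝ ψ₂ (Strip2 R))
    (hsys₁ : ∀ p ∈ Strip2 R,
      pd1 (pd1 ψ₁) p + pd2 (pd2 ψ₁) p = (2 * H (ψ₁ p)) • lcross (pd1 ψ₁ p) (pd2 ψ₁ p))
    (hsys₂ : ∀ p ∈ Strip2 R,
      pd1 (pd1 ψ₂) p + pd2 (pd2 ψ₂) p = (2 * H (ψ₂ p)) • lcross (pd1 ψ₂ p) (pd2 ψ₂ p))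
    (hb0 : ∀ u : ℝ, ψ₁ (u, 0) = ψ₂ (u, 0))
    (hb1 : ∀ u : ℝ, pd2 ψ₁ (u, 0) = pd2 ψ₂ (u, 0)) :
    ∀ p ∈ Strip2 R, ψ₁ p = ψ₂ p := by
  set T : R3 × R3 × R3 → R3 := fun w => (2 * H w.1) • lcross w.2.1 w.2.2
  have hax (u : ℝ) : (u, (0 : ℝ)) ∈ Strip2 R := ⟨neg_lt_zero.2 hR, hR⟩
  have hT (u : ℝ) : ContDiffAt ℝ ∞ T (oneJet ψ₁ (u, 0)) := by
    have hH : ContDiffAt ℝ ∞ H (ψ₁ (u, 0)) := (hHa _ (hψ₁O _ (hax u))).contDiffAt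
    exact (contDiffAt_const.mul (hH.comp (oneJet ψ₁ (u, 0)) contDiffAt_fst)).smul
      (contDiff_lcross.contDiffAt.comp (oneJet ψ₁ (u, 0)) contDiffAt_snd)
  exact eqOn_strip2_of_iterate_pd2_eq_on_axis hR hψ₁a hψ₂a
    (iterate_pd2_eq_on_axis (isOpen_strip2 R) hax hψ₁a hψ₂a hT hsys₁ hsys₂ hb0 hb1)

/-- uniqueness for the Cauchy problem with real-analytic data: two
real-analytic solutions of `ψ_uu + ψ_vv = 2ℋ(ψ) ψ_u ×_L ψ_v` on `ℝ × (−R,R)` with the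
same Cauchy data on the real axis coincide. -/
theorem stmt12 (O : Set R3) (R : ℝ) (H : R3 → ℝ) (ψ₁ ψ₂ : ℝ × ℝ → R3)
    (hR : 0 < R) (hO : IsOpen O) (hHa : AnalyticOnNhd ℝ H O)
    (hψ₁O : ∀ p ∈ Strip2 R, ψ₁ p ∈ O) (hψ₂O : ∀ p ∈ Strip2 R, ψ₂ p ∈ O)
    (hψ₁a : AnalyticOnNhd ℝ ψ₁ (Strip2 R)) (hψ₂a : AnalyticOnNhd ℝ ψ₂ (Strip2 R))
    (hsys₁ : ∀ p ∈ Strip2 R,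
      pd1 (pd1 ψ₁) p + pd2 (pd2 ψ₁) p = (2 * H (ψ₁ p)) • lcross (pd1 ψ₁ p) (pd2 ψ₁ p))
    (hsys₂ : ∀ p ∈ Strip2 R,
      pd1 (pd1 ψ₂) p + pd2 (pd2 ψ₂) p = (2 * H (ψ₂ p)) • lcross (pd1 ψ₂ p) (pd2 ψ₂ p))
    (hb0 : ∀ u : ℝ, ψ₁ (u, 0) = ψ₂ (u, 0))
    (hb1 : ∀ u : ℝ, pd2 ψ₁ (u, 0) = pd2 ψ₂ (u, 0)) :
    ∀ p ∈ Strip2 R, ψ₁ p = ψ₂ p :=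
  stmt12_general O R H ψ₁ ψ₂ hR hHa hψ₁O hψ₁a hψ₂a hsys₁ hsys₂ hb0 hb1
end
end
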